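/- Let 𝒫 be a probability distribution on ℕ with 𝒫({even numbers}) = 𝒫({odd numbers}) = 1/2. For each n ≥ 2, sample a parity game from the random model G(n, 2) and fix the node v = 0 ∈ Fin n. Then the probability that v is self-winning tends to 0 as n → ∞. -/

import Mathlib

/-- `f : ℕ → V` is a play from `v`: it starts at `v` and follows edges. -/
def IsPlay {V : Type*} (E : V → V → Prop) (v : V) (f : ℕ → V) : Prop :=
  f 0 = v ∧ ∀ t, E (f t) (f (t + 1))

/-- A strategy for player `i`: given the past history and the current node owned
by `i`, it prescribes a successor of the current node. -/
def IsStrategy {V : Type*} (E : V → V → Prop) (a : V → ℤ) (i : ℤ)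
    (σ : List V → V → V) : Prop :=
  ∀ h w, a w = i → E w (σ h w)

/-- A play is consistent with the strategy `σ` of player `i` if every move out of
a node owned by `i` is the one prescribed by `σ`. -/
def ConsistentPlay {V : Type*} (a : V → ℤ) (i : ℤ) (σ : List V → V → V)
    (f : ℕ → V) : Prop :=
  ∀ t, a (f t) = i → f (t + 1) = σ (List.ofFn fun j : Fin t => f j) (f t)

/-- The `limsup` as `t → ∞` of the priorities seen along a play. -/
noncomputable def playLimsup {V : Type*} (p : V → ℕ) (f : ℕ → V) : ℕ :=
  Filter.atTop.limsup fun t => p (f t)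

/-- Player `+1` wins a play if the limsup of the priorities is odd;
player `-1` wins otherwise (i.e. if it is even). -/
def WinsPlay {V : Type*} (p : V → ℕ) (i : ℤ) (f : ℕ → V) : Prop :=
  if i = 1 then Odd (playLimsup p f) else Even (playLimsup p f)

/-- Player `i` has a winning strategy from `v`: some strategy of `i` wins every
play from `v` consistent with it. -/
def WinningFrom {V : Type*} (E : V → V → Prop) (a : V → ℤ) (p : V → ℕ)
    (i : ℤ) (v : V) : Prop :=
  ∃ σ : List V → V → V, IsStrategy E a i σ ∧
    ∀ f : ℕ → V, IsPlay E v f → ConsistentPlay a i σ f → WinsPlay p i f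

/-- A cycle `w 0, w 1, …, w k` (with `k ≥ 1`, `w k = w 0`, following edges) is
self-winning for player `i` if all its nodes are owned by `i` and the maximal
priority on it is odd when `i = +1` and even when `i = -1`. The node `v` is
required to lie on the cycle. -/
def OnSelfWinningCycle {V : Type*} (E : V → V → Prop) (a : V → ℤ) (p : V → ℕ)
    (i : ℤ) (v : V) : Prop :=
  ∃ (k : ℕ) (w : ℕ → V), 1 ≤ k ∧ w k = w 0 ∧
    (∀ j < k, E (w j) (w (j + 1))) ∧
    (∃ j < k, w j = v) ∧
    (∀ j < k, a (w j) = i) ∧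
    (if i = 1 then Odd ((Finset.range k).sup fun j => p (w j))
     else Even ((Finset.range k).sup fun j => p (w j)))

/-- A node is self-winning if it lies on a cycle that is self-winning for its
owner. -/
def SelfWinningNode {V : Type*} (E : V → V → Prop) (a : V → ℤ) (p : V → ℕ)
    (v : V) : Prop :=
  OnSelfWinningCycle E a p (a v) v

open MeasureTheory

instance (n : ℕ) : MeasurableSpace (Finset (Fin n)) := ⊤

/-- The uniform probability measure on a finite set `s`. -/
noncomputable def uniformFinset {α : Type*} [MeasurableSpace α] (s : Finset α) :
    Measure α :=
  (s.card : ENNReal)⁻¹ • ∑ x ∈ s, Measure.dirac x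

/-- A sample of the random parity game model on node set `Fin n`: the set of
successors of each node, the owner (`±1`) of each node, and the priority of each
node. -/
abbrev GameSample (n : ℕ) : Type :=
  (Fin n → Finset (Fin n)) × (Fin n → ℤ) × (Fin n → ℕ)

/-- The law of the random parity game model `G(n,d)` with priority distribution
`P`: independently for each node, its set of successors is a uniformly random
`d`-element subset of `Fin n`; independently, each node's owner is drawn i.i.d.
uniformly from `{-1,+1}`, and each node's priority is drawn i.i.d. from `P`. -/
noncomputable def gameMeasure (n d : ℕ) (P : Measure ℕ) : Measure (GameSample n) :=
  (Measure.pi fun _ : Fin n => uniformFinset (Finset.powersetCard d Finset.univ)).prod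
    ((Measure.pi fun _ : Fin n => uniformFinset ({-1, 1} : Finset ℤ)).prod
      (Measure.pi fun _ : Fin n => P))

/-- The edge relation of a sampled game: `(u, w) ∈ E` iff `w` is one of the
chosen successors of `u`. -/
def sampleE {n : ℕ} (ω : GameSample n) : Fin n → Fin n → Prop :=
  fun u w => w ∈ ω.1 u

/-! If `v` is self-winning, it lies on a simple cycle `v = u 0, u 1, …, u k` whose nodes all have
the same owner. For a fixed such cycle, the `k + 1` edges are present independently with
probability `2 / n` each and the owners agree with probability `2 · 2⁻⁽ᵏ⁺¹⁾`, so a union bound over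
the `(n - 1)(n - 2)⋯(n - k)` candidate cycles bounds the probability by
`2 / n · ∑ₖ ∏_{1 ≤ i ≤ k} (1 - i / n)`. Splitting this sum at `k = √n` gives at most `4 / √n`. -/

open MeasureTheory Finset
open scoped ENNReal

section ClosedWalk

variable {V : Type*} (R : V → V → Prop)

def IsClosedWalk (k : ℕ) (w : ℕ → V) : Prop :=
  0 < k ∧ w k = w 0 ∧ ∀ j < k, R (w j) (w (j + 1))

variable {R}

theorem IsClosedWalk.rotate {k : ℕ} {w : ℕ → V} (h : IsClosedWalk R k w) (i : ℕ) :
    IsClosedWalk R k fun t => w ((i + t) % k) := by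
  obtain ⟨hk, hcl, hstep⟩ := h
  refine ⟨hk, by simp, fun j _ => ?_⟩
  have hlt : (i + j) % k < k := Nat.mod_lt _ hk
  dsimp only
  rw [← add_assoc, ← Nat.mod_add_mod (i + j)]
  rcases (show (i + j) % k + 1 ≤ k from hlt).lt_or_eq with hsucc | hsucc
  · rw [Nat.mod_eq_of_lt hsucc]
    exact hstep _ hlt
  · simpa [hsucc, hcl] using hstep _ hlt

theorem IsClosedWalk.shortcut {k i j : ℕ} {w : ℕ → V} (h : IsClosedWalk R k w) (hij : i < j)
    (hjk : j < k) (hw : w i = w j) :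
    IsClosedWalk R (k - (j - i)) fun t => if t ≤ i then w t else w (t + (j - i)) := by
  obtain ⟨hk, hcl, hstep⟩ := h
  refine ⟨by omega, ?_, fun t ht => ?_⟩ <;> dsimp only
  · rw [if_neg (by omega), if_pos (Nat.zero_le _), Nat.sub_add_cancel (by omega), hcl]
  · rcases lt_trichotomy t i with hti | rfl | hit
    · rw [if_pos hti.le, if_pos hti.nat_succ_le]
      exact hstep t (by omega)
    · rw [if_pos le_rfl, if_neg (by omega), hw, show t + 1 + (j - t) = j + 1 by omega]
      exact hstep j hjk
    · rw [if_neg (by omega), if_neg (by omega), show t + 1 + (j - i) = t + (j - i) + 1 by omega]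
      exact hstep _ (by omega)

theorem IsClosedWalk.exists_injOn {k : ℕ} {w : ℕ → V} (h : IsClosedWalk R k w) :
    ∃ m w', IsClosedWalk R m w' ∧ w' 0 = w 0 ∧ Set.InjOn w' (Set.Iio m) := by
  classical
  have hex : ∃ m w', IsClosedWalk R m w' ∧ w' 0 = w 0 := ⟨k, w, h, rfl⟩
  obtain ⟨w', hw', hw'0⟩ := Nat.find_spec hex
  refine ⟨_, w', hw', hw'0, ?_⟩
  by_contra hinj
  obtain ⟨i, j, hij, hj, hwij⟩ : ∃ i j, i < j ∧ j < Nat.find hex ∧ w' i = w' j := by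
    simp only [Set.InjOn, Set.mem_Iio, not_forall] at hinj
    obtain ⟨i, hi, j, hj, hwij, hne⟩ := hinj
    rcases lt_or_gt_of_ne hne with hlt | hlt
    · exact ⟨i, j, hlt, hj, hwij⟩
    · exact ⟨j, i, hlt, hi, hwij.symm⟩
  refine Nat.find_min hex (m := Nat.find hex - (j - i)) (by omega)
    ⟨_, hw'.shortcut hij hj hwij, ?_⟩
  simpa using hw'0

end ClosedWalk

theorem OnSelfWinningCycle.exists_injective_cycle {V : Type*} {E : V → V → Prop} {a : V → ℤ}
    {p : V → ℕ} {i : ℤ} {v : V} (h : OnSelfWinningCycle E a p i v) :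
    ∃ (k : ℕ) (u : Fin (k + 1) → V), Function.Injective u ∧ u 0 = v ∧
      ∀ j, E (u j) (u (finRotate _ j)) ∧ a (u j) = i := by
  obtain ⟨k, w, hk, hcl, hstep, ⟨j₀, hj₀, rfl⟩, hown, -⟩ := h
  have hwalk : IsClosedWalk (fun x y => E x y ∧ a x = i) k w :=
    ⟨hk, hcl, fun j hj => ⟨hstep j hj, hown j hj⟩⟩
  obtain ⟨m, w', ⟨hm, hcl', hstep'⟩, hw'0, hinj⟩ := (hwalk.rotate j₀).exists_injOn
  obtain ⟨m, rfl⟩ := Nat.exists_eq_add_one_of_ne_zero hm.ne'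
  refine ⟨m, fun j => w' j, fun j₁ j₂ h => Fin.ext (hinj j₁.isLt j₂.isLt h),
    by simpa [Nat.mod_eq_of_lt hj₀] using hw'0, fun j => ?_⟩
  have hj := hstep' j j.isLt
  simp only [finRotate_apply, Fin.val_add_one]
  split_ifs with hlast
  · simpa [hlast, hcl'] using hj
  · exact hj

section UniformFinset

variable {α : Type*} [MeasurableSpace α]

theorem uniformFinset_apply (s : Finset α) {t : Set α} [DecidablePred (· ∈ t)]
    (ht : MeasurableSet t) : uniformFinset s t = #{x ∈ s | x ∈ t} / #s := by
  simp [uniformFinset, Measure.dirac_apply' _ ht, Set.indicator_apply, Finset.sum_boole,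
    ENNReal.div_eq_inv_mul]

theorem isProbabilityMeasure_uniformFinset {s : Finset α} (hs : s.Nonempty) :
    IsProbabilityMeasure (uniformFinset s) := by
  classical
  constructor
  rw [uniformFinset_apply s MeasurableSet.univ, filter_true_of_mem fun _ _ => Set.mem_univ _,
    ENNReal.div_self (by simpa using hs.ne_empty) (ENNReal.natCast_ne_top _)]

end UniformFinset

theorem uniformFinset_powersetCard_two_mem_le {n : ℕ} (hn : 2 ≤ n) (x : Fin n) :
    uniformFinset (powersetCard 2 (univ : Finset (Fin n))) {s | x ∈ s} ≤ 2 / n := by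
  classical
  rw [uniformFinset_apply _ MeasurableSpace.measurableSet_top, card_powersetCard, card_fin]
  have hpairs : {s ∈ powersetCard 2 (univ : Finset (Fin n)) | s ∈ {s | x ∈ s}} ⊆
      (univ.erase x).image fun y => ({x, y} : Finset (Fin n)) := by
    intro s hs
    simp only [mem_filter, mem_powersetCard, Set.mem_ofPred_eq] at hs
    obtain ⟨⟨-, hcard⟩, hxs⟩ := hs
    obtain ⟨y, hyx, rfl⟩ : ∃ y, y ≠ x ∧ s = {x, y} := by
      obtain ⟨b, c, hbc, rfl⟩ := card_eq_two.mp hcard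
      rcases mem_insert.mp hxs with rfl | hxc
      · exact ⟨c, hbc.symm, rfl⟩
      · rw [mem_singleton.mp hxc]; exact ⟨b, hbc, pair_comm _ _⟩
    exact mem_image.mpr ⟨y, mem_erase.mpr ⟨hyx, mem_univ y⟩, rfl⟩
  have hcount : #{s ∈ powersetCard 2 (univ : Finset (Fin n)) | s ∈ {s | x ∈ s}} ≤ n - 1 :=
    (card_le_card hpairs).trans (card_image_le.trans (by simp))
  have hchoose : (2 : ℝ≥0∞) * n.choose 2 = (n - 1 : ℕ) * n := by
    rw [Nat.choose_two_right]
    exact_mod_cast Nat.mul_div_cancel' (Nat.even_mul_pred_self n).two_dvd |>.trans (mul_comm _ _)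
  refine ENNReal.div_le_of_le_mul ?_
  calc (#{s ∈ powersetCard 2 (univ : Finset (Fin n)) | s ∈ {s | x ∈ s}} : ℝ≥0∞)
        ≤ (n - 1 : ℕ) := by exact_mod_cast hcount
    _ = 2 / n * n.choose 2 := by
        rw [← ENNReal.mul_div_right_comm, hchoose,
          ENNReal.mul_div_cancel_right (by simp; omega) (ENNReal.natCast_ne_top n)]

theorem uniformFinset_sign_le (c : ℤ) : uniformFinset ({-1, 1} : Finset ℤ) {c} ≤ 2⁻¹ := by
  classical
  have hsub : {z ∈ ({-1, 1} : Finset ℤ) | z ∈ ({c} : Set ℤ)} ⊆ {c} := fun z hz => by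
    simpa using (mem_filter.1 hz).2
  rw [uniformFinset_apply _ (measurableSet_singleton c), ← one_div]
  gcongr
  · exact_mod_cast (card_le_card hsub).trans (card_singleton c).le
  · rfl

theorem uniformFinset_sign_compl :
    uniformFinset ({-1, 1} : Finset ℤ) (↑({-1, 1} : Finset ℤ))ᶜ = 0 := by
  classical
  rw [uniformFinset_apply _ (MeasurableSet.of_discrete)]
  simp

theorem MeasureTheory.Measure.pi_setOf_forall_comp_mem_le {ι κ α : Type*} [Fintype ι]
    [Fintype κ] [MeasurableSpace α] (μ : Measure α) [IsProbabilityMeasure μ] {u : ι → κ}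
    (hu : Function.Injective u) (B : ι → Set α) :
    Measure.pi (fun _ : κ => μ) {f | ∀ i, f (u i) ∈ B i} ≤ ∏ i, μ (B i) := by
  classical
  set T : κ → Set α := fun x => {y | ∀ i, u i = x → y ∈ B i}
  have hbox : {f : κ → α | ∀ i, f (u i) ∈ B i} = Set.univ.pi T := by
    ext f
    simp only [Set.mem_ofPred_eq, Set.mem_univ_pi, T]
    exact ⟨fun h x i hi => hi ▸ h i, fun h i => h (u i) i rfl⟩
  calc Measure.pi (fun _ => μ) {f | ∀ i, f (u i) ∈ B i} = ∏ x, μ (T x) := by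
        rw [hbox, Measure.pi_pi]
    _ ≤ ∏ x ∈ univ.image u, μ (T x) :=
        prod_le_prod_of_subset_of_le_one' (subset_univ _) fun _ _ _ => prob_le_one
    _ = ∏ i, μ (T (u i)) := prod_image hu.injOn
    _ ≤ ∏ i, μ (B i) := prod_le_prod' fun i _ => measure_mono fun y hy => hy i rfl

instance : IsProbabilityMeasure (uniformFinset ({-1, 1} : Finset ℤ)) :=
  isProbabilityMeasure_uniformFinset ⟨1, by simp⟩

theorem isProbabilityMeasure_uniformFinset_powersetCard_two {n : ℕ} (hn : 2 ≤ n) :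
    IsProbabilityMeasure (uniformFinset (powersetCard 2 (univ : Finset (Fin n)))) :=
  isProbabilityMeasure_uniformFinset (powersetCard_nonempty.2 (by simpa using hn))

theorem pi_uniformFinset_powersetCard_two_forall_mem_le {ι : Type*} [Fintype ι] {n : ℕ}
    (hn : 2 ≤ n) {u : ι → Fin n} (hu : Function.Injective u) (t : ι → Fin n) :
    Measure.pi (fun _ : Fin n => uniformFinset (powersetCard 2 univ)) {f | ∀ i, t i ∈ f (u i)} ≤
      (2 / n) ^ Fintype.card ι := by
  have := isProbabilityMeasure_uniformFinset_powersetCard_two hn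
  calc _ ≤ ∏ i, uniformFinset (powersetCard 2 univ) {s | t i ∈ s} :=
        Measure.pi_setOf_forall_comp_mem_le _ hu fun i => {s | t i ∈ s}
    _ ≤ ∏ _i : ι, (2 / n : ℝ≥0∞) :=
        prod_le_prod' fun i _ => uniformFinset_powersetCard_two_mem_le hn (t i)
    _ = (2 / n) ^ Fintype.card ι := by simp

theorem pi_uniformFinset_sign_forall_eq_le {ι κ : Type*} [Fintype ι] [Fintype κ] {u : ι → κ}
    (hu : Function.Injective u) (i₀ : ι) :
    Measure.pi (fun _ : κ => uniformFinset ({-1, 1} : Finset ℤ)) {g | ∀ i, g (u i) = g (u i₀)} ≤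
      2 * 2⁻¹ ^ Fintype.card ι := by
  set μ := Measure.pi fun _ : κ => uniformFinset ({-1, 1} : Finset ℤ)
  have hsub : {g : κ → ℤ | ∀ i, g (u i) = g (u i₀)} ⊆
      (⋃ c ∈ ({-1, 1} : Finset ℤ), {g | ∀ i, g (u i) ∈ ({c} : Set ℤ)}) ∪
        Function.eval (u i₀) ⁻¹' (↑({-1, 1} : Finset ℤ))ᶜ := by
    intro g hg
    by_cases hc : g (u i₀) ∈ ({-1, 1} : Finset ℤ)
    · exact Or.inl (Set.mem_biUnion hc fun i => hg i)
    · exact Or.inr hc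
  have hnull : μ (Function.eval (u i₀) ⁻¹' (↑({-1, 1} : Finset ℤ))ᶜ) = 0 :=
    Measure.pi_eval_preimage_null _ uniformFinset_sign_compl
  calc μ {g | ∀ i, g (u i) = g (u i₀)}
      ≤ μ (⋃ c ∈ ({-1, 1} : Finset ℤ), {g | ∀ i, g (u i) ∈ ({c} : Set ℤ)}) := by
        refine (measure_mono hsub).trans ((measure_union_le _ _).trans_eq ?_)
        rw [hnull, add_zero]
    _ ≤ ∑ _c ∈ ({-1, 1} : Finset ℤ), 2⁻¹ ^ Fintype.card ι := by
        refine (measure_biUnion_finset_le _ _).trans (sum_le_sum fun c _ => ?_)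
        refine (Measure.pi_setOf_forall_comp_mem_le _ hu _).trans
          ((prod_le_prod' fun i _ => uniformFinset_sign_le c).trans_eq ?_)
        simp
    _ = 2 * 2⁻¹ ^ Fintype.card ι := by simp

/-- `u 0 → u 1 → ⋯ → u k → u 0` is a cycle of the sampled game whose nodes all have the same
owner. -/
def monochromaticCycleEvent {n k : ℕ} (u : Fin (k + 1) → Fin n) : Set (GameSample n) :=
  {f | ∀ j, u (finRotate _ j) ∈ f (u j)} ×ˢ ({g | ∀ j, g (u j) = g (u 0)} ×ˢ Set.univ)

theorem gameMeasure_monochromaticCycleEvent_le {n k : ℕ} (P : Measure ℕ) [IsProbabilityMeasure P]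
    (hn : 2 ≤ n) {u : Fin (k + 1) → Fin n} (hu : Function.Injective u) :
    gameMeasure n 2 P (monochromaticCycleEvent u) ≤ 2 * (n : ℝ≥0∞)⁻¹ ^ (k + 1) := by
  have := isProbabilityMeasure_uniformFinset_powersetCard_two hn
  rw [gameMeasure, monochromaticCycleEvent, Measure.prod_prod, Measure.prod_prod, measure_univ,
    mul_one]
  calc _ ≤ (2 / n : ℝ≥0∞) ^ (k + 1) * (2 * 2⁻¹ ^ (k + 1)) := by
        gcongr
        · simpa using pi_uniformFinset_powersetCard_two_forall_mem_le hn hu (u ∘ finRotate _)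
        · simpa using pi_uniformFinset_sign_forall_eq_le hu 0
    _ = 2 * ((n : ℝ≥0∞)⁻¹ * (2 * 2⁻¹)) ^ (k + 1) := by rw [ENNReal.div_eq_inv_mul]; ring
    _ = 2 * (n : ℝ≥0∞)⁻¹ ^ (k + 1) := by
        rw [ENNReal.mul_inv_cancel two_ne_zero ENNReal.ofNat_ne_top, mul_one]

theorem setOf_selfWinningNode_subset {n : ℕ} (v : Fin n) :
    {ω : GameSample n | SelfWinningNode (sampleE ω) ω.2.1 ω.2.2 v} ⊆
      ⋃ (k : ℕ) (e : Fin k ↪ {x // x ≠ v}),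
        monochromaticCycleEvent (Fin.cons v fun i => (e i : Fin n)) := by
  intro ω hω
  obtain ⟨k, u, hu, hu0, hcycle⟩ := OnSelfWinningCycle.exists_injective_cycle hω
  let e : Fin k ↪ {x // x ≠ v} :=
    ⟨fun i => ⟨u i.succ, hu0 ▸ hu.ne (Fin.succ_ne_zero i)⟩,
      fun i j h => Fin.succ_injective _ (hu (congrArg Subtype.val h))⟩
  have hue : (Fin.cons v fun i => (e i : Fin n)) = u := hu0 ▸ Fin.cons_self_tail u
  simp only [Set.mem_iUnion]
  refine ⟨k, e, ?_⟩
  rw [hue]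
  exact ⟨fun j => (hcycle j).1, fun j => (hcycle j).2.trans (congrArg _ hu0.symm), trivial⟩

theorem card_embedding_subtype_ne {n : ℕ} (k : ℕ) (v : Fin n) :
    Fintype.card (Fin k ↪ {x // x ≠ v}) = (n - 1).descFactorial k := by
  simp [Fintype.card_embedding_eq, Fintype.card_subtype_compl]

theorem gameMeasure_selfWinningNode_le_tsum {n : ℕ} (hn : 2 ≤ n) (v : Fin n) (P : Measure ℕ)
    [IsProbabilityMeasure P] :
    gameMeasure n 2 P {ω | SelfWinningNode (sampleE ω) ω.2.1 ω.2.2 v} ≤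
      2 * ∑' k, ((n - 1).descFactorial k : ℝ≥0∞) * (n : ℝ≥0∞)⁻¹ ^ (k + 1) := by
  calc _ ≤ ∑' (k : ℕ) (e : Fin k ↪ {x // x ≠ v}),
        gameMeasure n 2 P (monochromaticCycleEvent (Fin.cons v fun i => (e i : Fin n))) :=
        (measure_mono (setOf_selfWinningNode_subset v)).trans <| (measure_iUnion_le _).trans <|
          ENNReal.tsum_le_tsum fun k => measure_iUnion_le _
    _ ≤ ∑' (k : ℕ) (_ : Fin k ↪ {x // x ≠ v}), 2 * (n : ℝ≥0∞)⁻¹ ^ (k + 1) :=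
        ENNReal.tsum_le_tsum fun k => ENNReal.tsum_le_tsum fun e =>
          gameMeasure_monochromaticCycleEvent_le P hn <| Fin.cons_injective_iff.2
            ⟨fun ⟨i, hi⟩ => (e i).2 hi, Subtype.val_injective.comp e.injective⟩
    _ = _ := by
        simp only [tsum_fintype, sum_const, card_univ, card_embedding_subtype_ne, nsmul_eq_mul,
          ← ENNReal.tsum_mul_left]
        congr 1 with k
        ring

theorem Nat.descFactorial_le_pow_mul_pow (n k K : ℕ) :
    n.descFactorial k ≤ n ^ min k K * (n - K) ^ (k - K) := by
  induction k with
  | zero => simp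
  | succ k ih =>
    rw [Nat.descFactorial_succ]
    rcases lt_or_ge k K with hk | hk
    · rw [min_eq_left hk.le, Nat.sub_eq_zero_of_le hk.le, pow_zero, mul_one] at ih
      rw [min_eq_left hk, Nat.sub_eq_zero_of_le hk, pow_zero, mul_one, pow_succ']
      exact Nat.mul_le_mul (Nat.sub_le n k) ih
    · rw [min_eq_right hk] at ih
      rw [min_eq_right (by omega), Nat.sub_add_comm hk]
      calc (n - k) * n.descFactorial k ≤ (n - K) * (n ^ K * (n - K) ^ (k - K)) :=
            Nat.mul_le_mul (by omega) ih
        _ = n ^ K * (n - K) ^ (k - K + 1) := by ring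

/-- Splitting the terms at `k = K`: the first `K` are at most `1/n` each, and beyond `K` every
further factor of the falling factorial is at most `(n - K)/n`. -/
theorem tsum_descFactorial_mul_inv_pow_le {n K : ℕ} (hK : 0 < K) (hKn : K ≤ n) :
    ∑' k, ((n - 1).descFactorial k : ℝ≥0∞) * (n : ℝ≥0∞)⁻¹ ^ (k + 1) ≤ K / n + (K : ℝ≥0∞)⁻¹ := by
  set x := (n : ℝ≥0∞)⁻¹
  set r := ((n - K : ℕ) : ℝ≥0∞) * x
  have hn : (n : ℝ≥0∞) ≠ 0 := by simp; omega
  have hnx : (n : ℝ≥0∞) * x = 1 := ENNReal.mul_inv_cancel hn (ENNReal.natCast_ne_top n)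
  have hterm : ∀ k, ((n - 1).descFactorial k : ℝ≥0∞) * x ^ (k + 1) ≤ x * r ^ (k - K) := by
    intro k
    have hD : (n - 1).descFactorial k ≤ n ^ min k K * (n - K) ^ (k - K) :=
      (Nat.descFactorial_le_pow_mul_pow _ k K).trans (by gcongr <;> omega)
    calc ((n - 1).descFactorial k : ℝ≥0∞) * x ^ (k + 1)
        ≤ ((n ^ min k K * (n - K) ^ (k - K) : ℕ) : ℝ≥0∞) * x ^ (k + 1) := by
          gcongr
      _ = x * ((n * x) ^ min k K * r ^ (k - K)) := by
          rw [show k + 1 = 1 + min k K + (k - K) by omega]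
          simp only [r, Nat.cast_mul, Nat.cast_pow, mul_pow, pow_add]
          ring
      _ = x * r ^ (k - K) := by rw [hnx, one_pow, one_mul]
  have hgeom : ∑' k, r ^ (k - K) = K + (1 - r)⁻¹ := by
    have hhead : ∑ k ∈ range K, r ^ (k - K) = K := by
      rw [sum_congr rfl fun k hk => by rw [Nat.sub_eq_zero_of_le (mem_range.1 hk).le, pow_zero]]
      simp
    have htail : ∑' k, r ^ (k + K - K) = (1 - r)⁻¹ := by
      simp only [Nat.add_sub_cancel]
      exact ENNReal.tsum_geometric r
    rw [← Summable.sum_add_tsum_nat_add' (f := fun k => r ^ (k - K)) (k := K) ENNReal.summable,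
      hhead, htail]
  have hr : (1 - r)⁻¹ = (K : ℝ≥0∞)⁻¹ * n := by
    have hsum : 1 = K * x + r := by
      rw [← hnx, ← add_mul, ← Nat.cast_add, Nat.add_sub_cancel' hKn]
    have hr_ne_top : r ≠ ∞ :=
      ENNReal.mul_ne_top (ENNReal.natCast_ne_top _) (ENNReal.inv_ne_top.2 hn)
    rw [ENNReal.sub_eq_of_eq_add hr_ne_top hsum,
      ENNReal.mul_inv (Or.inl (by simp; omega)) (by simp), inv_inv]
  calc _ ≤ ∑' k, x * r ^ (k - K) := ENNReal.tsum_le_tsum hterm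
    _ = K / n + (K : ℝ≥0∞)⁻¹ * (n * x) := by
        rw [ENNReal.tsum_mul_left, hgeom, hr, ENNReal.div_eq_inv_mul]
        ring
    _ = K / n + (K : ℝ≥0∞)⁻¹ := by rw [hnx, mul_one]

theorem gameMeasure_selfWinningNode_le {n : ℕ} (hn : 2 ≤ n) (v : Fin n) (P : Measure ℕ)
    [IsProbabilityMeasure P] :
    gameMeasure n 2 P {ω | SelfWinningNode (sampleE ω) ω.2.1 ω.2.2 v} ≤
      4 * (n.sqrt : ℝ≥0∞)⁻¹ := by
  set K := n.sqrt
  have hK : 0 < K := Nat.sqrt_pos.2 (by omega)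
  have hK_div : (K : ℝ≥0∞) / n ≤ (K : ℝ≥0∞)⁻¹ := by
    refine ENNReal.div_le_of_le_mul ?_
    calc (K : ℝ≥0∞) = (K : ℝ≥0∞)⁻¹ * (K * K) := by
          rw [ENNReal.inv_mul_cancel_left (by simp; omega) (ENNReal.natCast_ne_top K)]
      _ ≤ (K : ℝ≥0∞)⁻¹ * n := by gcongr; exact_mod_cast Nat.sqrt_le n
  calc _ ≤ 2 * (K / n + (K : ℝ≥0∞)⁻¹) :=
        (gameMeasure_selfWinningNode_le_tsum hn v P).trans
          (by gcongr; exact tsum_descFactorial_mul_inv_pow_le hK (Nat.sqrt_le_self n))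
    _ ≤ 2 * ((K : ℝ≥0∞)⁻¹ + (K : ℝ≥0∞)⁻¹) := by gcongr
    _ = 4 * (K : ℝ≥0∞)⁻¹ := by ring

theorem selfWinning_probability_tendsto_zero_general (P : Measure ℕ) [IsProbabilityMeasure P] :
    Filter.Tendsto
      (fun n : ℕ => gameMeasure (n + 2) 2 P
        {ω : GameSample (n + 2) |
          SelfWinningNode (sampleE ω) ω.2.1 ω.2.2 0})
      Filter.atTop (nhds 0) := by
  have hsqrt : Filter.Tendsto (fun n : ℕ => (n + 2).sqrt) Filter.atTop Filter.atTop :=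
    Filter.tendsto_atTop_atTop.2 fun b => ⟨b * b, fun n hn => Nat.le_sqrt.2 (by omega)⟩
  have hbound :
      Filter.Tendsto (fun n : ℕ => 4 * ((n + 2).sqrt : ℝ≥0∞)⁻¹) Filter.atTop (nhds 0) := by
    simpa using ENNReal.Tendsto.const_mul (ENNReal.tendsto_inv_nat_nhds_zero.comp hsqrt)
      (Or.inr ENNReal.ofNat_ne_top)
  exact tendsto_of_tendsto_of_tendsto_of_le_of_le tendsto_const_nhds hbound (fun _ => zero_le)
    fun n => gameMeasure_selfWinningNode_le (by omega) 0 P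

/-- **self-winning nodes are rare for `d = 2`.** Let `P` be a
probability distribution on ℕ giving mass `1/2` to the even numbers and `1/2` to
the odd numbers. Sample a parity game from `G(n, 2)` (node set `Fin (n+2)`, so
`n ≥ 2` nodes) and fix the node `v = 0`. Then the probability that `v` is
self-winning tends to `0` as the number of nodes tends to infinity. -/
theorem selfWinning_probability_tendsto_zero (P : Measure ℕ) [IsProbabilityMeasure P]
    (hPeven : P {k | Even k} = 1 / 2) (hPodd : P {k | Odd k} = 1 / 2) :
    Filter.Tendsto
      (fun n : ℕ => gameMeasure (n + 2) 2 P
        {ω : GameSample (n + 2) |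
          SelfWinningNode (sampleE ω) ω.2.1 ω.2.2 0})
      Filter.atTop (nhds 0) :=
  selfWinning_probability_tendsto_zero_general P
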